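/- Let f : K → ℝ be α-Hölder continuous and g : K → ℝ be β-Hölder continuous with 0 < α, β ≤ 1 and ∑_{s∈S} r_s^{α+β} < 1. Assume there exists M ∈ ℕ such that for all n ≥ M, all 𝐬 ∈ S^n and all l ∈ {0,…,N−2} one has g(b_{(𝐬,l)}) = g(a_{(𝐬,l+1)}) (i.e. g is constant on the endpoints of every hole of sufficiently deep level). Then the pair (f,g) is integrable on K, i.e. the sequence (φ_n(f,g))_n converges. -/

import Mathlib

/-!
Under the hole condition at level `n`, `g(b_𝐬) − g(a_𝐬)` telescopes into
`∑_t (g(b_{𝐬t}) − g(a_{𝐬t}))`, hence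
`φ_{n+1} − φ_n = ∑_{𝐬,t} (f(a_{𝐬t}) + f(b_{𝐬t}) − f(a_𝐬) − f(b_𝐬)) (g(b_{𝐬t}) − g(a_{𝐬t}))`.
All these points lie in `K` (`a` and `b` are fixed points of `f_0` and `f_{N−1}`) and within
distance `r_𝐬 (b − a)` of each other, so by Hölder continuity each term is `O(r_𝐬^{α+β})`.
Summing over `𝐬 ∈ S^n` gives `|φ_{n+1} − φ_n| = O((∑_s r_s^{α+β})^n)`, a geometric bound.
-/

open Filter Topology

/-- For a word `s = (s_1, …, s_n)` over the alphabet `Fin (N+1)`,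
`wmap F s = F s_1 ∘ ⋯ ∘ F s_n`. -/
noncomputable def wmap {N n : ℕ} (F : Fin (N + 1) → ℝ → ℝ) (s : Fin n → Fin (N + 1)) :
    ℝ → ℝ :=
  (List.ofFn s).foldr (fun i h => F i ∘ h) id

/-- `φ_n(f,g) = ∑_{s ∈ S^n} (f(a_s)+f(b_s))·(g(b_s)−g(a_s))`. -/
noncomputable def phiSeq {N : ℕ} (F : Fin (N + 1) → ℝ → ℝ) (a b : ℝ) (f g : ℝ → ℝ)
    (n : ℕ) : ℝ :=
  ∑ s : Fin n → Fin (N + 1),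
    (f (wmap F s a) + f (wmap F s b)) * (g (wmap F s b) - g (wmap F s a))

/-- The self-similar set `K = ⋂_{n ≥ 1} ⋃_{s ∈ S^n} f_s([a,b])`. -/
noncomputable def ssSet {N : ℕ} (F : Fin (N + 1) → ℝ → ℝ) (a b : ℝ) : Set ℝ :=
  ⋂ n : ℕ, ⋃ s : Fin (n + 1) → Fin (N + 1), wmap F s '' Set.Icc a b

open Set

section Words

variable {N : ℕ} (F : Fin (N + 1) → ℝ → ℝ)

lemma wmap_cons {n : ℕ} (i : Fin (N + 1)) (s : Fin n → Fin (N + 1)) :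
    wmap F (Fin.cons i s) = F i ∘ wmap F s := by
  simp only [wmap, List.ofFn_succ, Fin.cons_zero, Fin.cons_succ, List.foldr_cons]

lemma wmap_snoc {n : ℕ} (s : Fin n → Fin (N + 1)) (t : Fin (N + 1)) :
    wmap F (Fin.snoc s t) = wmap F s ∘ F t := by
  induction s using Fin.consInduction with
  | elim0 => rfl
  | cons i s ih => rw [← Fin.cons_snoc_eq_snoc_cons, wmap_cons, wmap_cons, ih]; rfl

lemma wmap_const_apply_of_isFixedPt {z : Fin (N + 1)} {x : ℝ} (hx : Function.IsFixedPt (F z) x)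
    (n : ℕ) : wmap F (fun _ : Fin n => z) x = x := by
  induction n with
  | zero => rfl
  | succ n ih =>
    rw [← Fin.cons_self_tail (fun _ => z), wmap_cons]
    exact (congrArg (F z) ih).trans hx

lemma mapsTo_wmap {S : Set ℝ} (hF : ∀ i, MapsTo (F i) S S) {n : ℕ} (s : Fin n → Fin (N + 1)) :
    MapsTo (wmap F s) S S := by
  induction s using Fin.consInduction with
  | elim0 => exact mapsTo_id S
  | cons i s ih => rw [wmap_cons]; exact (hF i).comp ih

lemma wmap_sub_wmap {r c : Fin (N + 1) → ℝ} (hF : ∀ i x, F i x = r i * x + c i) {n : ℕ}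
    (s : Fin n → Fin (N + 1)) (x y : ℝ) :
    wmap F s x - wmap F s y = (∏ i, r (s i)) * (x - y) := by
  induction s using Fin.consInduction with
  | elim0 => simp [wmap]
  | cons i s ih =>
    simp only [wmap_cons, Function.comp_apply, hF, Fin.prod_univ_succ, Fin.cons_zero,
      Fin.cons_succ, mul_assoc, ← ih]
    ring

end Words

lemma sum_pi_fin_succ_eq_sum_sum_snoc {α M : Type*} [Fintype α] [AddCommMonoid M] {n : ℕ}
    (G : (Fin (n + 1) → α) → M) :
    ∑ s : Fin (n + 1) → α, G s = ∑ s : Fin n → α, ∑ t, G (Fin.snoc s t) := by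
  rw [← (Fin.snocEquiv fun _ => α).sum_comp, Fintype.sum_prod_type, Finset.sum_comm]
  rfl

lemma sum_sub_eq_of_castSucc_eq_succ {M : Type*} [AddCommGroup M] {N : ℕ} (u v : Fin (N + 1) → M)
    (h : ∀ l : Fin N, v l.castSucc = u l.succ) :
    ∑ t, (v t - u t) = v (Fin.last N) - u 0 := by
  rw [Finset.sum_sub_distrib, Fin.sum_univ_castSucc, Fin.sum_univ_succ (f := u)]
  simp only [h]
  abel

section SelfSimilarSet

variable {N : ℕ} {F : Fin (N + 1) → ℝ → ℝ} {a b : ℝ}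

lemma ssSet_subset_Icc (hF : ∀ i, MapsTo (F i) (Icc a b) (Icc a b)) : ssSet F a b ⊆ Icc a b := by
  intro x hx
  obtain ⟨s, y, hy, rfl⟩ := mem_iUnion.mp (mem_iInter.mp hx 0)
  exact mapsTo_wmap F hF s hy

lemma exists_wmap_image_of_mem_ssSet (hF : ∀ i, MapsTo (F i) (Icc a b) (Icc a b)) {x : ℝ}
    (hx : x ∈ ssSet F a b) (m : ℕ) : ∃ u : Fin m → Fin (N + 1), x ∈ wmap F u '' Icc a b := by
  cases m with
  | zero => exact ⟨Fin.elim0, x, ssSet_subset_Icc hF hx, rfl⟩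
  | succ m => exact mem_iUnion.mp (mem_iInter.mp hx m)

lemma mapsTo_ssSet (hF : ∀ i, MapsTo (F i) (Icc a b) (Icc a b)) (i : Fin (N + 1)) :
    MapsTo (F i) (ssSet F a b) (ssSet F a b) := by
  intro x hx
  refine mem_iInter.mpr fun m => mem_iUnion.mpr ?_
  obtain ⟨u, hu⟩ := exists_wmap_image_of_mem_ssSet hF hx m
  refine ⟨Fin.cons i u, ?_⟩
  rw [wmap_cons, image_comp]
  exact mem_image_of_mem _ hu

lemma mem_ssSet_of_isFixedPt {z : Fin (N + 1)} {x : ℝ} (hz : Function.IsFixedPt (F z) x)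
    (hx : x ∈ Icc a b) : x ∈ ssSet F a b :=
  mem_iInter.mpr fun m => mem_iUnion.mpr
    ⟨fun _ => z, x, hx, wmap_const_apply_of_isFixedPt F hz (m + 1)⟩

lemma wmap_mem_ssSet (hF : ∀ i, MapsTo (F i) (Icc a b) (Icc a b)) {n : ℕ}
    (s : Fin n → Fin (N + 1)) {x : ℝ} (hx : x ∈ ssSet F a b) : wmap F s x ∈ ssSet F a b :=
  mapsTo_wmap F (mapsTo_ssSet hF) s hx

lemma mapsTo_Icc_of_endpoints (hmono : ∀ i, Monotone (F i)) (hab : a ≤ b) (ha : F 0 a = a)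
    (hb : F (Fin.last N) b = b) (hord : ∀ l : Fin N, F l.castSucc b ≤ F l.succ a)
    (i : Fin (N + 1)) :
    MapsTo (F i) (Icc a b) (Icc a b) := by
  have hleft : ∀ i, a ≤ F i a := by
    intro i
    induction i using Fin.induction with
    | zero => rw [ha]
    | succ l ih => exact ih.trans ((hmono _ hab).trans (hord l))
  have hright : ∀ i, F i b ≤ b := by
    intro i
    induction i using Fin.reverseInduction with
    | last => rw [hb]
    | cast l ih => exact ((hord l).trans (hmono _ hab)).trans ih
  exact fun x hx => ⟨(hleft i).trans (hmono i hx.1), (hmono i hx.2).trans (hright i)⟩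

end SelfSimilarSet

section Phi

variable {N : ℕ} {F : Fin (N + 1) → ℝ → ℝ} {a b : ℝ} {f g : ℝ → ℝ}

lemma phiSeq_succ (n : ℕ) :
    phiSeq F a b f g (n + 1) = ∑ s : Fin n → Fin (N + 1), ∑ t,
      (f (wmap F s (F t a)) + f (wmap F s (F t b))) *
        (g (wmap F s (F t b)) - g (wmap F s (F t a))) := by
  simp only [phiSeq, sum_pi_fin_succ_eq_sum_sum_snoc, wmap_snoc, Function.comp_apply]

lemma sub_eq_sum_of_holes (ha : F 0 a = a) (hb : F (Fin.last N) b = b) {n : ℕ}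
    (s : Fin n → Fin (N + 1))
    (hs : ∀ l : Fin N, g (wmap F s (F l.castSucc b)) = g (wmap F s (F l.succ a))) :
    g (wmap F s b) - g (wmap F s a) = ∑ t, (g (wmap F s (F t b)) - g (wmap F s (F t a))) := by
  rw [sum_sub_eq_of_castSucc_eq_succ (fun t => g (wmap F s (F t a)))
    (fun t => g (wmap F s (F t b))) hs, ha, hb]

lemma phiSeq_succ_sub_phiSeq (ha : F 0 a = a) (hb : F (Fin.last N) b = b) {n : ℕ}
    (hn : ∀ s : Fin n → Fin (N + 1), ∀ l : Fin N,
      g (wmap F s (F l.castSucc b)) = g (wmap F s (F l.succ a))) :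
    phiSeq F a b f g (n + 1) - phiSeq F a b f g n = ∑ s : Fin n → Fin (N + 1), ∑ t,
      (f (wmap F s (F t a)) + f (wmap F s (F t b)) - (f (wmap F s a) + f (wmap F s b))) *
        (g (wmap F s (F t b)) - g (wmap F s (F t a))) := by
  rw [phiSeq_succ, phiSeq, ← Finset.sum_sub_distrib]
  refine Finset.sum_congr rfl fun s _ => ?_
  rw [sub_eq_sum_of_holes ha hb s (hn s), Finset.mul_sum, ← Finset.sum_sub_distrib]
  exact Finset.sum_congr rfl fun t _ => by ring

end Phi

section Estimate

variable {N : ℕ} {r c : Fin (N + 1) → ℝ} {F : Fin (N + 1) → ℝ → ℝ} {a b : ℝ}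

lemma abs_comp_wmap_sub_le (hF : ∀ i x, F i x = r i * x + c i) (hr : ∀ i, 0 ≤ r i)
    (hmaps : ∀ i, MapsTo (F i) (Icc a b) (Icc a b)) {f : ℝ → ℝ} {C α : ℝ} (hC : 0 ≤ C)
    (hα : 0 ≤ α) (hf : ∀ x ∈ ssSet F a b, ∀ y ∈ ssSet F a b, |f x - f y| ≤ C * |x - y| ^ α)
    {n : ℕ} (s : Fin n → Fin (N + 1)) {x y : ℝ} (hx : x ∈ ssSet F a b) (hy : y ∈ ssSet F a b) :
    |f (wmap F s x) - f (wmap F s y)| ≤ C * ((∏ i, r (s i)) * (b - a)) ^ α := by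
  have hxy : |x - y| ≤ b - a := by
    have hx' := ssSet_subset_Icc hmaps hx
    have hy' := ssSet_subset_Icc hmaps hy
    exact abs_sub_le_iff.mpr ⟨by linarith [hx'.2, hy'.1], by linarith [hx'.1, hy'.2]⟩
  have hdist : |wmap F s x - wmap F s y| ≤ (∏ i, r (s i)) * (b - a) := by
    rw [wmap_sub_wmap F hF, abs_mul, abs_of_nonneg (Finset.prod_nonneg fun i _ => hr (s i))]
    gcongr
    exact Finset.prod_nonneg fun i _ => hr (s i)
  calc |f (wmap F s x) - f (wmap F s y)| ≤ C * |wmap F s x - wmap F s y| ^ α :=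
        hf _ (wmap_mem_ssSet hmaps s hx) _ (wmap_mem_ssSet hmaps s hy)
    _ ≤ C * ((∏ i, r (s i)) * (b - a)) ^ α := by gcongr

lemma abs_phiSeq_term_le
    (hF : ∀ i x, F i x = r i * x + c i) (hr : ∀ i, 0 ≤ r i) (hab : a ≤ b)
    (ha : F 0 a = a) (hb : F (Fin.last N) b = b) (hmaps : ∀ i, MapsTo (F i) (Icc a b) (Icc a b))
    {f g : ℝ → ℝ} {Cf Cg α β : ℝ} (hCf : 0 ≤ Cf) (hCg : 0 ≤ Cg) (hα : 0 < α) (hβ : 0 < β)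
    (hf : ∀ x ∈ ssSet F a b, ∀ y ∈ ssSet F a b, |f x - f y| ≤ Cf * |x - y| ^ α)
    (hg : ∀ x ∈ ssSet F a b, ∀ y ∈ ssSet F a b, |g x - g y| ≤ Cg * |x - y| ^ β)
    {n : ℕ} (s : Fin n → Fin (N + 1)) (t : Fin (N + 1)) :
    |(f (wmap F s (F t a)) + f (wmap F s (F t b)) - (f (wmap F s a) + f (wmap F s b))) *
        (g (wmap F s (F t b)) - g (wmap F s (F t a)))|
      ≤ 2 * Cf * Cg * ((∏ i, r (s i)) * (b - a)) ^ (α + β) := by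
  have haK : a ∈ ssSet F a b := mem_ssSet_of_isFixedPt ha ⟨le_rfl, hab⟩
  have hbK : b ∈ ssSet F a b := mem_ssSet_of_isFixedPt hb ⟨hab, le_rfl⟩
  have hfa := abs_comp_wmap_sub_le hF hr hmaps hCf hα.le hf s (mapsTo_ssSet hmaps t haK) haK
  have hfb := abs_comp_wmap_sub_le hF hr hmaps hCf hα.le hf s (mapsTo_ssSet hmaps t hbK) hbK
  have hgt := abs_comp_wmap_sub_le hF hr hmaps hCg hβ.le hg s (mapsTo_ssSet hmaps t hbK)
    (mapsTo_ssSet hmaps t haK)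
  have hδ : 0 ≤ (∏ i, r (s i)) * (b - a) :=
    mul_nonneg (Finset.prod_nonneg fun i _ => hr (s i)) (sub_nonneg.mpr hab)
  have hfsum : |f (wmap F s (F t a)) + f (wmap F s (F t b)) - (f (wmap F s a) + f (wmap F s b))|
      ≤ 2 * Cf * ((∏ i, r (s i)) * (b - a)) ^ α := by
    rw [add_sub_add_comm]
    linarith [abs_add_le (f (wmap F s (F t a)) - f (wmap F s a))
      (f (wmap F s (F t b)) - f (wmap F s b))]
  rw [abs_mul, Real.rpow_add' hδ (add_pos hα hβ).ne', ← mul_mul_mul_comm]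
  exact mul_le_mul hfsum hgt (abs_nonneg _) (by positivity)

lemma abs_phiSeq_succ_sub_le
    (hF : ∀ i x, F i x = r i * x + c i) (hr : ∀ i, 0 ≤ r i) (hab : a ≤ b)
    (ha : F 0 a = a) (hb : F (Fin.last N) b = b) (hmaps : ∀ i, MapsTo (F i) (Icc a b) (Icc a b))
    {f g : ℝ → ℝ} {Cf Cg α β : ℝ} (hCf : 0 ≤ Cf) (hCg : 0 ≤ Cg) (hα : 0 < α) (hβ : 0 < β)
    (hf : ∀ x ∈ ssSet F a b, ∀ y ∈ ssSet F a b, |f x - f y| ≤ Cf * |x - y| ^ α)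
    (hg : ∀ x ∈ ssSet F a b, ∀ y ∈ ssSet F a b, |g x - g y| ≤ Cg * |x - y| ^ β)
    {n : ℕ} (hn : ∀ s : Fin n → Fin (N + 1), ∀ l : Fin N,
      g (wmap F s (F l.castSucc b)) = g (wmap F s (F l.succ a))) :
    |phiSeq F a b f g (n + 1) - phiSeq F a b f g n|
      ≤ 2 * Cf * Cg * (N + 1) * (b - a) ^ (α + β) * (∑ t, r t ^ (α + β)) ^ n := by
  rw [phiSeq_succ_sub_phiSeq ha hb hn]
  calc _ ≤ ∑ s : Fin n → Fin (N + 1), ∑ t : Fin (N + 1),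
          2 * Cf * Cg * ((∏ i, r (s i)) * (b - a)) ^ (α + β) :=
        (Finset.abs_sum_le_sum_abs _ _).trans <| Finset.sum_le_sum fun s _ =>
          (Finset.abs_sum_le_sum_abs _ _).trans <| Finset.sum_le_sum fun t _ =>
            abs_phiSeq_term_le hF hr hab ha hb hmaps hCf hCg hα hβ hf hg s t
    _ = _ := by
      rw [Fintype.sum_pow, Finset.mul_sum]
      refine Finset.sum_congr rfl fun s _ => ?_
      rw [Finset.sum_const, Finset.card_univ, Fintype.card_fin, nsmul_eq_mul,
        Real.mul_rpow (Finset.prod_nonneg fun i _ => hr (s i)) (sub_nonneg.mpr hab),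
        ← Real.finsetProd_rpow _ _ fun i _ => hr (s i)]
      push_cast
      ring

end Estimate

lemma exists_nonneg_holder_const {K : Set ℝ} {f : ℝ → ℝ} {α : ℝ}
    (h : ∃ C : ℝ, ∀ x ∈ K, ∀ y ∈ K, |f x - f y| ≤ C * |x - y| ^ α) :
    ∃ C : ℝ, 0 ≤ C ∧ ∀ x ∈ K, ∀ y ∈ K, |f x - f y| ≤ C * |x - y| ^ α := by
  obtain ⟨C, hC⟩ := h
  exact ⟨max C 0, le_max_right C 0, fun x hx y hy =>
    (hC x hx y hy).trans (by gcongr; exact le_max_left C 0)⟩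

lemma exists_tendsto_of_abs_sub_le_geometric {x : ℕ → ℝ} {C ρ : ℝ} (hρ : ρ < 1) (M : ℕ)
    (h : ∀ n, M ≤ n → |x (n + 1) - x n| ≤ C * ρ ^ n) : ∃ L, Tendsto x atTop (𝓝 L) := by
  have hcauchy : CauchySeq fun n => x (n + M) := by
    refine cauchySeq_of_le_geometric ρ (C * ρ ^ M) hρ fun n => ?_
    rw [Real.dist_eq, abs_sub_comm, Nat.add_right_comm, mul_assoc, ← pow_add, add_comm M]
    exact h (n + M) (Nat.le_add_left M n)
  obtain ⟨L, hL⟩ := cauchySeq_tendsto_of_complete hcauchy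
  exact ⟨L, (tendsto_add_atTop_iff_nat M).mp hL⟩

theorem integrable_of_eventually_constant_on_holes_general
    {N : ℕ} (r c : Fin (N + 1) → ℝ)
    (hr0 : ∀ s, 0 < r s)
    (a b : ℝ) (hab : a < b)
    (F : Fin (N + 1) → ℝ → ℝ) (hF : ∀ s x, F s x = r s * x + c s)
    (ha : F 0 a = a) (hb : F (Fin.last N) b = b)
    (hord : ∀ l : Fin N, F l.castSucc b ≤ F l.succ a)
    (f g : ℝ → ℝ) (α β : ℝ)
    (hα0 : 0 < α) (hβ0 : 0 < β)
    (hf : ∃ C : ℝ, ∀ x ∈ ssSet F a b, ∀ y ∈ ssSet F a b, |f x - f y| ≤ C * |x - y| ^ α)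
    (hg : ∃ C : ℝ, ∀ x ∈ ssSet F a b, ∀ y ∈ ssSet F a b, |g x - g y| ≤ C * |x - y| ^ β)
    (hdim : ∑ s : Fin (N + 1), r s ^ (α + β) < 1)
    (hconst : ∃ M : ℕ, ∀ n : ℕ, M ≤ n → ∀ s : Fin n → Fin (N + 1), ∀ l : Fin N,
      g (wmap F s (F l.castSucc b)) = g (wmap F s (F l.succ a))) :
    ∃ L : ℝ, Tendsto (phiSeq F a b f g) atTop (nhds L) := by
  obtain ⟨Cf, hCf, hf⟩ := exists_nonneg_holder_const hf
  obtain ⟨Cg, hCg, hg⟩ := exists_nonneg_holder_const hg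
  obtain ⟨M, hM⟩ := hconst
  have hr : ∀ i, 0 ≤ r i := fun i => (hr0 i).le
  have hmono : ∀ i, Monotone (F i) := fun i x y hxy => by
    rw [hF, hF]
    exact add_le_add_left (mul_le_mul_of_nonneg_left hxy (hr i)) _
  have hmaps := mapsTo_Icc_of_endpoints hmono hab.le ha hb hord
  exact exists_tendsto_of_abs_sub_le_geometric hdim M fun n hn =>
    abs_phiSeq_succ_sub_le hF hr hab.le ha hb hmaps hCf hCg hα0 hβ0 hf hg (hM n hn)

/-- If `f` is `α`-Hölder, `g` is `β`-Hölder on `K`, `0 < α, β ≤ 1`,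
`∑_s r_s^{α+β} < 1`, and from some level `M` on `g` takes equal values at the two
endpoints `b_{(s,l)}, a_{(s,l+1)}` of every hole, then `(f,g)` is integrable. -/
theorem integrable_of_eventually_constant_on_holes
    {N : ℕ} (r c : Fin (N + 1) → ℝ)
    (hr0 : ∀ s, 0 < r s) (hr1 : ∀ s, r s < 1)
    (a b : ℝ) (hab : a < b)
    (F : Fin (N + 1) → ℝ → ℝ) (hF : ∀ s x, F s x = r s * x + c s)
    (ha : F 0 a = a) (hb : F (Fin.last N) b = b)
    (hord : ∀ l : Fin N, F l.castSucc b ≤ F l.succ a)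
    (f g : ℝ → ℝ) (α β : ℝ)
    (hα0 : 0 < α) (hα1 : α ≤ 1) (hβ0 : 0 < β) (hβ1 : β ≤ 1)
    (hf : ∃ C : ℝ, ∀ x ∈ ssSet F a b, ∀ y ∈ ssSet F a b, |f x - f y| ≤ C * |x - y| ^ α)
    (hg : ∃ C : ℝ, ∀ x ∈ ssSet F a b, ∀ y ∈ ssSet F a b, |g x - g y| ≤ C * |x - y| ^ β)
    (hdim : ∑ s : Fin (N + 1), r s ^ (α + β) < 1)
    (hconst : ∃ M : ℕ, ∀ n : ℕ, M ≤ n → ∀ s : Fin n → Fin (N + 1), ∀ l : Fin N,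
      g (wmap F s (F l.castSucc b)) = g (wmap F s (F l.succ a))) :
    ∃ L : ℝ, Tendsto (phiSeq F a b f g) atTop (nhds L) :=
  integrable_of_eventually_constant_on_holes_general r c hr0 a b hab F hF ha hb hord f g α β hα0 hβ0
    hf hg hdim hconst
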